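/- Let d, w₁, w₂ be positive integers, ξ a root of unity, χ a Dirichlet character mod d, and B_{n,χ,ξ}(x) the generalized twisted Bernoulli polynomials. Then for every n ≥ 0, the identity of polynomials in x: w₁^{n−1} ∑_{i=0}^{w₁d−1} χ(i) ξ^{w₂ i} B_{n,χ,ξ^{w₁}}(w₂x + (w₂/w₁)·i) = w₂^{n−1} ∑_{i=0}^{w₂d−1} χ(i) ξ^{w₁ i} B_{n,χ,ξ^{w₂}}(w₁x + (w₁/w₂)·i) holds (equation (2.11), the m = 1 multiplication-type symmetry). -/

import Mathlib

/-- `e^{at}` as a formal power series over `ℂ`. -/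
noncomputable def expS (a : ℂ) : PowerSeries ℂ :=
  PowerSeries.mk fun n => a ^ n / n.factorial

open PowerSeries Finset

lemma expS_eq (a : ℂ) : expS a = rescale a (PowerSeries.exp ℂ) := by
  ext n
  simp [expS, PowerSeries.exp, coeff_rescale, div_eq_mul_inv]

lemma expS_mul (a b : ℂ) : expS a * expS b = expS (a + b) := by
  rw [expS_eq, expS_eq, expS_eq, PowerSeries.exp_mul_exp_eq_exp_add]

lemma rescale_expS (c a : ℂ) : rescale c (expS a) = expS (c * a) := by
  rw [expS_eq, expS_eq, rescale_rescale, mul_comm a c]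

lemma expS_pow (a : ℂ) (k : ℕ) : expS a ^ k = expS (k * a) := by
  induction k with
  | zero => simp [expS]; ext n; simp [PowerSeries.coeff_one, coeff_mk]; rcases n with _|n <;> simp
  | succ k ih => rw [pow_succ, ih, expS_mul]; push_cast; ring_nf

lemma rescale_C' (c a : ℂ) : rescale c (PowerSeries.C (R := ℂ) a) = PowerSeries.C (R := ℂ) a := by
  ext n
  simp [coeff_rescale, PowerSeries.coeff_C]
  rcases n with _|n <;> simp

lemma sum_range_mul_reindex {M : Type*} [AddCommMonoid M] (d w : ℕ) (hd : 0 < d)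
    (f : ℕ → M) :
    ∑ i ∈ range (w * d), f i =
      ∑ p ∈ range d ×ˢ range w, f (p.1 + d * p.2) := by
  refine Finset.sum_nbij' (fun i => (i % d, i / d)) (fun p => p.1 + d * p.2) ?_ ?_ ?_ ?_ ?_
  · intro i hi
    simp only [Finset.mem_range] at hi
    simp only [Finset.mem_product, Finset.mem_range]
    exact ⟨Nat.mod_lt _ hd, Nat.div_lt_of_lt_mul (by rwa [Nat.mul_comm] at hi)⟩
  · intro p hp
    simp only [Finset.mem_product, Finset.mem_range] at hp
    simp only [Finset.mem_range]
    calc p.1 + d * p.2 < d + d * p.2 := by omega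
    _ = d * (p.2 + 1) := by ring
    _ ≤ d * w := Nat.mul_le_mul_left d hp.2
    _ = w * d := Nat.mul_comm d w
  · intro i _; simp [Nat.mod_add_div]
  · intro p hp
    simp only [Finset.mem_product, Finset.mem_range] at hp
    simp [Nat.add_mul_mod_self_left, Nat.mod_eq_of_lt hp.1, Nat.add_mul_div_left _ _ hd,
      Nat.div_eq_of_lt hp.1]
  · intro i _; rw [Nat.mod_add_div]

lemma key_sum (d w u : ℕ) (hd : 0 < d) (ξ : ℂ) (χ : DirichletCharacter ℂ d) :
    ∑ i ∈ range (w * d), PowerSeries.C (R := ℂ) (χ (i : ZMod d) * ξ ^ (u * i)) * expS ((u : ℂ) * i)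
      = (∑ a ∈ range d, PowerSeries.C (R := ℂ) (χ (a : ZMod d) * (ξ ^ u) ^ a) * expS ((u : ℂ) * a)) *
        ∑ j ∈ range w, (PowerSeries.C (R := ℂ) ((ξ ^ u) ^ d) * expS ((u : ℂ) * d)) ^ j := by
  rw [Finset.sum_mul_sum, sum_range_mul_reindex d w hd, Finset.sum_product]
  apply Finset.sum_congr rfl
  intro a ha
  apply Finset.sum_congr rfl
  intro j hj
  have hχ : χ (((a + d * j : ℕ)) : ZMod d) = χ (a : ZMod d) := by
    push_cast
    simp [ZMod.natCast_self]
  rw [hχ]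
  rw [mul_pow, ← map_pow, expS_pow, mul_mul_mul_comm, ← map_mul, expS_mul]
  congr 2
  · rw [mul_assoc, ← pow_mul, ← pow_mul, ← pow_mul, ← pow_add]
    ring_nf
  · push_cast; ring

lemma Dne (c e : ℂ) (hc : c ≠ 0) (he : e ≠ 0) :
    PowerSeries.C (R := ℂ) c * expS e - 1 ≠ 0 := by
  intro h
  have h1 := congrArg (PowerSeries.coeff (R := ℂ) 1) h
  simp [expS, PowerSeries.coeff_one, PowerSeries.coeff_C_mul, PowerSeries.coeff_mk] at h1
  tauto

lemma main_aux (d w w' : ℕ) (hd : 0 < d) (hw : 0 < w)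
    (ξ : ℂ) (χ : DirichletCharacter ℂ d) (B : ℕ → ℂ → ℂ)
    (hB : ∀ x : ℂ,
      (PowerSeries.mk fun n => B n x / n.factorial) *
          (PowerSeries.C (R := ℂ) ((ξ ^ w) ^ d) * expS d - 1) =
        PowerSeries.X *
          (∑ a ∈ range d, PowerSeries.C (R := ℂ) (χ (a : ZMod d) * (ξ ^ w) ^ a) * expS a) *
          expS x) (x : ℂ) :
    (∑ i ∈ range (w * d), PowerSeries.C (R := ℂ) (χ (i : ZMod d) * ξ ^ (w' * i)) *
        (PowerSeries.mk fun n => (w : ℂ) ^ n *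
          (B n ((w' : ℂ) * x + ((w' : ℂ) / (w : ℂ)) * i) / n.factorial)))
      * ((PowerSeries.C (R := ℂ) ((ξ ^ w) ^ d) * expS ((w : ℂ) * d) - 1) *
         (PowerSeries.C (R := ℂ) ((ξ ^ w') ^ d) * expS ((w' : ℂ) * d) - 1))
    = PowerSeries.C (R := ℂ) (w : ℂ) *
        (PowerSeries.X *
          (∑ a ∈ range d, PowerSeries.C (R := ℂ) (χ (a : ZMod d) * (ξ ^ w) ^ a) * expS ((w : ℂ) * a)) *
          (∑ a ∈ range d, PowerSeries.C (R := ℂ) (χ (a : ZMod d) * (ξ ^ w') ^ a) * expS ((w' : ℂ) * a)) *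
          expS ((w : ℂ) * (w' : ℂ) * x) *
          (PowerSeries.C (R := ℂ) (ξ ^ (w * w' * d)) * expS ((w : ℂ) * w' * d) - 1)) := by
  have hw0 : (w : ℂ) ≠ 0 := Nat.cast_ne_zero.mpr hw.ne'
  set S1 := ∑ a ∈ range d, PowerSeries.C (R := ℂ) (χ (a : ZMod d) * (ξ ^ w) ^ a) * expS ((w : ℂ) * a)
    with hS1
  set S2 := ∑ a ∈ range d, PowerSeries.C (R := ℂ) (χ (a : ZMod d) * (ξ ^ w') ^ a) * expS ((w' : ℂ) * a)
    with hS2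
  set D₁ := PowerSeries.C (R := ℂ) ((ξ ^ w) ^ d) * expS ((w : ℂ) * d) - 1 with hD₁
  set y := PowerSeries.C (R := ℂ) ((ξ ^ w') ^ d) * expS ((w' : ℂ) * d) with hy
  set E := expS ((w : ℂ) * (w' : ℂ) * x) with hE
  have h1 : ∀ i : ℕ,
      (PowerSeries.mk fun n => (w : ℂ) ^ n *
          (B n ((w' : ℂ) * x + ((w' : ℂ) / (w : ℂ)) * i) / n.factorial)) * D₁ =
        (PowerSeries.C (R := ℂ) (w : ℂ) * PowerSeries.X) * S1 * (E * expS ((w' : ℂ) * i)) := by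
    intro i
    have h := congrArg (PowerSeries.rescale (w : ℂ)) (hB ((w' : ℂ) * x + ((w' : ℂ) / (w : ℂ)) * i))
    simp only [map_mul, map_sub, map_one, PowerSeries.rescale_mk, rescale_C', rescale_expS,
      PowerSeries.rescale_X, map_sum] at h
    rw [hD₁, hS1, hE]
    rw [h]
    have harg : (w : ℂ) * ((w' : ℂ) * x + ((w' : ℂ) / (w : ℂ)) * i) =
        (w : ℂ) * (w' : ℂ) * x + (w' : ℂ) * i := by field_simp
    rw [harg, ← expS_mul]
    have hs : ∑ a ∈ range d, PowerSeries.C (R := ℂ) (χ (a : ZMod d)) * PowerSeries.C (R := ℂ) ((ξ ^ w) ^ a) *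
        expS ((w : ℂ) * a) = S1 := by
      rw [hS1]; exact Finset.sum_congr rfl fun a _ => by rw [← map_mul]
    rw [hs]
  calc (∑ i ∈ range (w * d), PowerSeries.C (R := ℂ) (χ (i : ZMod d) * ξ ^ (w' * i)) *
        (PowerSeries.mk fun n => (w : ℂ) ^ n *
          (B n ((w' : ℂ) * x + ((w' : ℂ) / (w : ℂ)) * i) / n.factorial))) * (D₁ * (y - 1))
      = ∑ i ∈ range (w * d), PowerSeries.C (R := ℂ) (χ (i : ZMod d) * ξ ^ (w' * i)) *
          ((PowerSeries.mk fun n => (w : ℂ) ^ n *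
            (B n ((w' : ℂ) * x + ((w' : ℂ) / (w : ℂ)) * i) / n.factorial)) * D₁) * (y - 1) := by
        rw [Finset.sum_mul]
        exact Finset.sum_congr rfl fun i _ => by ring
    _ = ∑ i ∈ range (w * d), PowerSeries.C (R := ℂ) (χ (i : ZMod d) * ξ ^ (w' * i)) *
          ((PowerSeries.C (R := ℂ) (w : ℂ) * PowerSeries.X) * S1 * (E * expS ((w' : ℂ) * i))) * (y - 1) := by
        exact Finset.sum_congr rfl fun i _ => by rw [h1 i]
    _ = ((PowerSeries.C (R := ℂ) (w : ℂ) * PowerSeries.X) * S1 * E * (y - 1)) *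
          ∑ i ∈ range (w * d), PowerSeries.C (R := ℂ) (χ (i : ZMod d) * ξ ^ (w' * i)) *
            expS ((w' : ℂ) * i) := by
        conv_rhs => rw [Finset.mul_sum]
        exact Finset.sum_congr rfl fun i _ => by ring
    _ = ((PowerSeries.C (R := ℂ) (w : ℂ) * PowerSeries.X) * S1 * E * (y - 1)) *
          (S2 * ∑ j ∈ range w, y ^ j) := by
        rw [key_sum d w w' hd ξ χ]
    _ = (PowerSeries.C (R := ℂ) (w : ℂ) * PowerSeries.X) * S1 * S2 * E *
          ((∑ j ∈ range w, y ^ j) * (y - 1)) := by ring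
    _ = (PowerSeries.C (R := ℂ) (w : ℂ) * PowerSeries.X) * S1 * S2 * E * (y ^ w - 1) := by
        rw [geom_sum_mul]
    _ = PowerSeries.C (R := ℂ) (w : ℂ) * (PowerSeries.X * S1 * S2 * E *
          (PowerSeries.C (R := ℂ) (ξ ^ (w * w' * d)) * expS ((w : ℂ) * w' * d) - 1)) := by
        have hyw : y ^ w = PowerSeries.C (R := ℂ) (ξ ^ (w * w' * d)) * expS ((w : ℂ) * w' * d) := by
          rw [hy, mul_pow, ← map_pow, expS_pow]
          congr 2
          · rw [← pow_mul, ← pow_mul]; ring_nf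
          · push_cast; ring
        rw [hyw]; ring

/-- Multiplication-type symmetry (2.11) for the generalized twisted Bernoulli polynomials
(case `m = 1`): `w₁^{n-1} ∑_{i<w₁d} χ(i) ξ^{w₂i} B_{n,χ,ξ^{w₁}}(w₂x + (w₂/w₁)i)
= w₂^{n-1} ∑_{i<w₂d} χ(i) ξ^{w₁i} B_{n,χ,ξ^{w₂}}(w₁x + (w₁/w₂)i)`. -/
theorem generalized_twisted_bernoulli_multiplication_symmetry
    (d w₁ w₂ : ℕ) (hd : 0 < d) (hw₁ : 0 < w₁) (hw₂ : 0 < w₂)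
    (ξ : ℂ) (hξ : ∃ m : ℕ, 0 < m ∧ ξ ^ m = 1)
    (χ : DirichletCharacter ℂ d) (B1 B2 : ℕ → ℂ → ℂ)
    (hB1 : ∀ x : ℂ,
      (PowerSeries.mk fun n => B1 n x / n.factorial) *
          (PowerSeries.C (R := ℂ) ((ξ ^ w₁) ^ d) * expS d - 1) =
        PowerSeries.X *
          (∑ a ∈ Finset.range d, PowerSeries.C (R := ℂ) (χ (a : ZMod d) * (ξ ^ w₁) ^ a) * expS a) *
          expS x)
    (hB2 : ∀ x : ℂ,
      (PowerSeries.mk fun n => B2 n x / n.factorial) *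
          (PowerSeries.C (R := ℂ) ((ξ ^ w₂) ^ d) * expS d - 1) =
        PowerSeries.X *
          (∑ a ∈ Finset.range d, PowerSeries.C (R := ℂ) (χ (a : ZMod d) * (ξ ^ w₂) ^ a) * expS a) *
          expS x)
    (n : ℕ) (x : ℂ) :
    (w₁ : ℂ) ^ ((n : ℤ) - 1) *
        ∑ i ∈ Finset.range (w₁ * d), χ (i : ZMod d) * ξ ^ (w₂ * i) *
          B1 n ((w₂ : ℂ) * x + ((w₂ : ℂ) / (w₁ : ℂ)) * i) =
      (w₂ : ℂ) ^ ((n : ℤ) - 1) *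
        ∑ i ∈ Finset.range (w₂ * d), χ (i : ZMod d) * ξ ^ (w₁ * i) *
          B2 n ((w₁ : ℂ) * x + ((w₁ : ℂ) / (w₂ : ℂ)) * i) := by
  have hξ0 : ξ ≠ 0 := by
    obtain ⟨m, hm, h1⟩ := hξ
    intro h
    rw [h, zero_pow hm.ne'] at h1
    exact zero_ne_one h1
  have hw10 : (w₁ : ℂ) ≠ 0 := Nat.cast_ne_zero.mpr hw₁.ne'
  have hw20 : (w₂ : ℂ) ≠ 0 := Nat.cast_ne_zero.mpr hw₂.ne'
  have hd0 : (d : ℂ) ≠ 0 := Nat.cast_ne_zero.mpr hd.ne'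
  have H1 := main_aux d w₁ w₂ hd hw₁ ξ χ B1 hB1 x
  have H2 := main_aux d w₂ w₁ hd hw₂ ξ χ B2 hB2 x
  rw [show w₂ * w₁ * d = w₁ * w₂ * d from by ring,
    show (w₂ : ℂ) * (w₁ : ℂ) * x = (w₁ : ℂ) * (w₂ : ℂ) * x from by ring,
    show (w₂ : ℂ) * (w₁ : ℂ) * (d : ℂ) = (w₁ : ℂ) * (w₂ : ℂ) * (d : ℂ) from by ring] at H2
  set S1 := ∑ a ∈ range d, PowerSeries.C (R := ℂ) (χ (a : ZMod d) * (ξ ^ w₁) ^ a) * expS ((w₁ : ℂ) * a)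
  set S2 := ∑ a ∈ range d, PowerSeries.C (R := ℂ) (χ (a : ZMod d) * (ξ ^ w₂) ^ a) * expS ((w₂ : ℂ) * a)
  set D₁ := PowerSeries.C (R := ℂ) ((ξ ^ w₁) ^ d) * expS ((w₁ : ℂ) * d) - 1 with hD₁def
  set D₂ := PowerSeries.C (R := ℂ) ((ξ ^ w₂) ^ d) * expS ((w₂ : ℂ) * d) - 1 with hD₂def
  set E := PowerSeries.X * S1 * S2 * expS ((w₁ : ℂ) * (w₂ : ℂ) * x) *
    (PowerSeries.C (R := ℂ) (ξ ^ (w₁ * w₂ * d)) * expS ((w₁ : ℂ) * (w₂ : ℂ) * (d : ℂ)) - 1) with hEdef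
  set P₁ := ∑ i ∈ range (w₁ * d), PowerSeries.C (R := ℂ) (χ (i : ZMod d) * ξ ^ (w₂ * i)) *
      (PowerSeries.mk fun m => (w₁ : ℂ) ^ m *
        (B1 m ((w₂ : ℂ) * x + ((w₂ : ℂ) / (w₁ : ℂ)) * i) / m.factorial)) with hP₁def
  set P₂ := ∑ i ∈ range (w₂ * d), PowerSeries.C (R := ℂ) (χ (i : ZMod d) * ξ ^ (w₁ * i)) *
      (PowerSeries.mk fun m => (w₂ : ℂ) ^ m *
        (B2 m ((w₁ : ℂ) * x + ((w₁ : ℂ) / (w₂ : ℂ)) * i) / m.factorial)) with hP₂def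
  have H1' : P₁ * (D₁ * D₂) = PowerSeries.C (R := ℂ) (w₁ : ℂ) * E := H1
  have H2' : P₂ * (D₂ * D₁) = PowerSeries.C (R := ℂ) (w₂ : ℂ) *
      (PowerSeries.X * S2 * S1 * expS ((w₁ : ℂ) * (w₂ : ℂ) * x) *
        (PowerSeries.C (R := ℂ) (ξ ^ (w₁ * w₂ * d)) * expS ((w₁ : ℂ) * (w₂ : ℂ) * (d : ℂ)) - 1)) := H2
  have H2'' : P₂ * (D₂ * D₁) = PowerSeries.C (R := ℂ) (w₂ : ℂ) * E := by
    rw [H2', hEdef]; ring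
  have hD : D₁ * D₂ ≠ 0 := by
    refine mul_ne_zero (Dne _ _ ?_ ?_) (Dne _ _ ?_ ?_)
    · exact pow_ne_zero _ (pow_ne_zero _ hξ0)
    · exact mul_ne_zero hw10 hd0
    · exact pow_ne_zero _ (pow_ne_zero _ hξ0)
    · exact mul_ne_zero hw20 hd0
  have key : (PowerSeries.C (R := ℂ) (w₂ : ℂ) * P₁) * (D₁ * D₂) =
      (PowerSeries.C (R := ℂ) (w₁ : ℂ) * P₂) * (D₁ * D₂) := by
    calc (PowerSeries.C (R := ℂ) (w₂ : ℂ) * P₁) * (D₁ * D₂)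
        = PowerSeries.C (R := ℂ) (w₂ : ℂ) * (P₁ * (D₁ * D₂)) := by ring
      _ = PowerSeries.C (R := ℂ) (w₂ : ℂ) * (PowerSeries.C (R := ℂ) (w₁ : ℂ) * E) := by rw [H1']
      _ = PowerSeries.C (R := ℂ) (w₁ : ℂ) * (PowerSeries.C (R := ℂ) (w₂ : ℂ) * E) := by ring
      _ = PowerSeries.C (R := ℂ) (w₁ : ℂ) * (P₂ * (D₂ * D₁)) := by rw [H2'']
      _ = (PowerSeries.C (R := ℂ) (w₁ : ℂ) * P₂) * (D₁ * D₂) := by ring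
  have hP := mul_right_cancel₀ hD key
  have hc := congrArg (PowerSeries.coeff (R := ℂ) n) hP
  simp only [hP₁def, hP₂def, PowerSeries.coeff_C_mul, map_sum, PowerSeries.coeff_mk] at hc
  have hA : ∑ i ∈ range (w₁ * d), χ (i : ZMod d) * ξ ^ (w₂ * i) *
      ((w₁ : ℂ) ^ n * (B1 n ((w₂ : ℂ) * x + ((w₂ : ℂ) / (w₁ : ℂ)) * i) / n.factorial)) =
      (w₁ : ℂ) ^ n / n.factorial * ∑ i ∈ range (w₁ * d), χ (i : ZMod d) * ξ ^ (w₂ * i) *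
        B1 n ((w₂ : ℂ) * x + ((w₂ : ℂ) / (w₁ : ℂ)) * i) := by
    rw [Finset.mul_sum]
    exact Finset.sum_congr rfl fun i _ => by ring
  have hB : ∑ i ∈ range (w₂ * d), χ (i : ZMod d) * ξ ^ (w₁ * i) *
      ((w₂ : ℂ) ^ n * (B2 n ((w₁ : ℂ) * x + ((w₁ : ℂ) / (w₂ : ℂ)) * i) / n.factorial)) =
      (w₂ : ℂ) ^ n / n.factorial * ∑ i ∈ range (w₂ * d), χ (i : ZMod d) * ξ ^ (w₁ * i) *
        B2 n ((w₁ : ℂ) * x + ((w₁ : ℂ) / (w₂ : ℂ)) * i) := by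
    rw [Finset.mul_sum]
    exact Finset.sum_congr rfl fun i _ => by ring
  rw [hA, hB] at hc
  have hfac : ((n.factorial : ℂ)) ≠ 0 := Nat.cast_ne_zero.mpr n.factorial_ne_zero
  rw [zpow_sub₀ hw10, zpow_one, zpow_natCast, zpow_sub₀ hw20, zpow_one, zpow_natCast]
  field_simp at hc ⊢
  linear_combination hc
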